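/- Let q be a power of 2 and let 𝔽_q be the finite field with q elements. Then there exists an irreducible λ-quiddity over 𝔽_q of size 4, and every irreducible λ-quiddity over 𝔽_q has size at most q² + 1. -/

import Mathlib

/-- The matrix `[[a, -1], [1, 0]]`. -/
def mMat {A : Type*} [CommRing A] (a : A) : Matrix (Fin 2) (Fin 2) A := !![a, -1; 1, 0]

/-- `M_n(a₁, …, aₙ) = mMat aₙ * ⋯ * mMat a₁`, for the tuple given as a list `[a₁, …, aₙ]`. -/
def mProd {A : Type*} [CommRing A] (l : List A) : Matrix (Fin 2) (Fin 2) A :=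
  ((l.map mMat).reverse).prod

/-- The sum `(a₁,…,aₙ) ⊕ (b₁,…,b_m) = (a₁+b_m, a₂,…,a_{n−1}, aₙ+b₁, b₂,…,b_{m−1})`. -/
def oplus {A : Type*} [CommRing A] (a b : List A) : List A :=
  (a.headD 0 + b.getLastD 0) ::
    (a.dropLast.tail ++ (a.getLastD 0 + b.headD 0) :: b.dropLast.tail)

/-- Two tuples are equivalent if one is a cyclic rotation of the other or of its reversal. -/
def TupEquiv {A : Type*} (a b : List A) : Prop :=
  (∃ k, b = a.rotate k) ∨ (∃ k, b = a.reverse.rotate k)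

/-- A λ-quiddity over `R ⊆ A`: all entries lie in `R` and `M_n(a₁,…,aₙ) = ± Id`. -/
def IsQuiddity {A : Type*} [CommRing A] (R : Set A) (c : List A) : Prop :=
  (∀ x ∈ c, x ∈ R) ∧ (mProd c = 1 ∨ mProd c = -1)

/-- A λ-quiddity `c` over `R` is reducible if `c ∼ a ⊕ b` with `a ∈ R^m`, `m ≥ 3`,
and `b` a λ-quiddity over `R` of size `l ≥ 3`. -/
def IsReducible {A : Type*} [CommRing A] (R : Set A) (c : List A) : Prop :=
  ∃ a b : List A, 3 ≤ a.length ∧ 3 ≤ b.length ∧ (∀ x ∈ a, x ∈ R) ∧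
    IsQuiddity R b ∧ TupEquiv c (oplus a b)

/-- An irreducible λ-quiddity over `R`: a λ-quiddity of size `≥ 3` which is not reducible. -/
def IrreducibleQuiddity {A : Type*} [CommRing A] (R : Set A) (c : List A) : Prop :=
  IsQuiddity R c ∧ 3 ≤ c.length ∧ ¬ IsReducible R c

/-- The continuant `K_i(a₁,…,a_i)`, determinant of the tridiagonal matrix with diagonal
`a₁,…,a_i` and off-diagonal entries `1`; `K₀ = 1`. -/
def cont {A : Type*} [CommRing A] : List A → A
  | [] => 1
  | [a] => a
  | a :: b :: l => a * cont (b :: l) - cont l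


/-
Let `c = (c₁,…,cₙ)` be a tuple over a ring with `q` elements. Since `det M(l) = 1`, the first row
of every prefix product `Pₖ = M(c₁,…,cₖ)` is a nonzero vector. If `Pᵢ` and `Pⱼ` (`i < j`) share
their first row, then `β = (cᵢ₊₁,…,cⱼ)` satisfies `M(β) Pᵢ = Pⱼ`, which forces
`M(β) = [[1,0],[y,1]]`; so `(0, β, y)` is a λ-quiddity (with `M = -Id`) and the rotation of `c`
starting at `cⱼ₊₁` is `a ⊕ (0, β, y)`. For `n ≥ q² + 2`, pigeonhole on the `n - 2` prefixes
`P₀,…,Pₙ₋₃` (short enough to leave `a` of size `≥ 3`) among the `q² - 1` nonzero rows gives such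
`i < j`.

A λ-quiddity `(b₀, b₁, b₂)` has `b₁ = ±1` by its `(1,1)` entry, and `b₁` is an entry of every
`a ⊕ (b₀, b₁, b₂)`; hence `(0,0,0,0)` is irreducible.
-/

lemma TupEquiv.perm {α : Type*} {a b : List α} (h : TupEquiv a b) : b.Perm a := by
  rcases h with ⟨k, rfl⟩ | ⟨k, rfl⟩
  · exact List.rotate_perm a k
  · exact (List.rotate_perm _ k).trans (List.reverse_perm a)

lemma List.rotate_eq_drop_append_take_append_drop_take {α : Type*} (c : List α) {i j : ℕ}
    (hij : i ≤ j) (hj : j ≤ c.length) :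
    c.rotate j = (c.drop j ++ c.take i) ++ (c.take j).drop i := by
  rw [List.rotate_eq_drop_append_take hj, List.append_assoc]
  conv_lhs => rw [← List.take_append_drop i (c.take j)]
  rw [List.take_take, min_eq_left hij]

section Quiddity

variable {A : Type*} [CommRing A]

lemma mProd_append (l l' : List A) : mProd (l ++ l') = mProd l' * mProd l := by
  simp [mProd]

lemma mProd_cons (a : A) (l : List A) : mProd (a :: l) = mProd l * mMat a := by
  rw [← List.singleton_append, mProd_append]
  simp [mProd]

lemma det_mProd (l : List A) : (mProd l).det = 1 := by
  induction l with
  | nil => simp [mProd]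
  | cons a l ih => simp [mProd_cons, ih, mMat, Matrix.det_fin_two_of]

lemma mProd_triple_one_one (b₀ b₁ b₂ : A) : mProd [b₀, b₁, b₂] 1 1 = -b₁ := by
  simp [mProd, mMat, Matrix.mul_apply, Fin.sum_univ_two]

lemma mProd_take_eq_mul (c : List A) {i j : ℕ} (hij : i ≤ j) :
    mProd (c.take j) = mProd ((c.take j).drop i) * mProd (c.take i) := by
  conv_lhs => rw [← List.take_append_drop i (c.take j)]
  rw [mProd_append, List.take_take, min_eq_left hij]

lemma oplus_length (a b : List A) (ha : 3 ≤ a.length) (hb : 3 ≤ b.length) :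
    (oplus a b).length = a.length + b.length - 2 := by
  simp only [oplus, List.length_cons, List.length_append, List.length_dropLast, List.length_tail]
  omega

lemma oplus_cons_append_singleton (a₀ a₁ b₀ b₁ : A) (u v : List A) :
    oplus (a₀ :: u ++ [a₁]) (b₀ :: v ++ [b₁]) = (a₀ + b₁) :: u ++ (a₁ + b₀) :: v := by
  rw [oplus, List.getLastD_concat, List.getLastD_concat, List.dropLast_concat,
    List.dropLast_concat]
  rfl

lemma eq_unitriangular_of_mul_row_eq {N P : Matrix (Fin 2) (Fin 2) A} (hN : N.det = 1)
    (hP : P.det = 1) (h : (N * P) 0 = P 0) : N = !![1, 0; N 1 0, 1] := by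
  have h₀ := congrFun h 0
  have h₁ := congrFun h 1
  simp only [Matrix.mul_apply, Fin.sum_univ_two] at h₀ h₁
  rw [Matrix.det_fin_two] at hN hP
  have hN₀₀ : N 0 0 = 1 := by
    linear_combination P 1 1 * h₀ - P 1 0 * h₁ + (1 - N 0 0) * hP
  have hN₀₁ : N 0 1 = 0 := by
    linear_combination P 0 0 * h₁ - P 0 1 * h₀ - N 0 1 * hP
  have hN₁₁ : N 1 1 = 1 := by
    linear_combination hN - N 1 1 * hN₀₀ + N 1 0 * hN₀₁
  ext i j
  fin_cases i <;> fin_cases j <;> simp [hN₀₀, hN₀₁, hN₁₁]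

lemma isQuiddity_of_mProd_eq_unitriangular {β : List A} {y : A}
    (hβ : mProd β = !![1, 0; y, 1]) : IsQuiddity Set.univ (0 :: β ++ [y]) := by
  refine ⟨fun _ _ => trivial, Or.inr ?_⟩
  rw [List.cons_append, mProd_cons, mProd_append, hβ]
  ext i j
  fin_cases i <;> fin_cases j <;> simp [mProd, mMat, Matrix.mul_apply, Fin.sum_univ_two]

lemma isReducible_of_rotate_eq_append {c e β : List A} {k : ℕ} {y : A}
    (hc : c.rotate k = e ++ β) (he : 3 ≤ e.length) (hβ : β ≠ [])
    (hβy : mProd β = !![1, 0; y, 1]) : IsReducible Set.univ c := by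
  obtain ⟨e₀, t, rfl⟩ :=
    List.exists_cons_of_ne_nil (List.ne_nil_of_length_pos (by omega : 0 < e.length))
  obtain rfl | ⟨u, e₁, rfl⟩ := List.eq_nil_or_concat t
  · simp at he
  refine ⟨(e₀ - y) :: u ++ [e₁], 0 :: β ++ [y], by simpa using he, ?_, fun _ _ => trivial,
    isQuiddity_of_mProd_eq_unitriangular hβy, Or.inl ⟨k, ?_⟩⟩
  · simpa [Nat.one_le_iff_ne_zero] using hβ
  · rw [oplus_cons_append_singleton, hc]
    simp

lemma isReducible_of_row_mProd_take_eq {c : List A} {i j : ℕ} (hij : i < j)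
    (hj : j + 3 ≤ c.length) (h : mProd (c.take i) 0 = mProd (c.take j) 0) :
    IsReducible Set.univ c := by
  have hβ := eq_unitriangular_of_mul_row_eq (det_mProd _) (det_mProd (c.take i))
    (by rw [← mProd_take_eq_mul c hij.le, h])
  refine isReducible_of_rotate_eq_append
    (c.rotate_eq_drop_append_take_append_drop_take hij.le (by omega)) ?_ ?_ hβ
  · simp only [List.length_append, List.length_drop, List.length_take]
    omega
  · refine List.ne_nil_of_length_pos ?_
    simp only [List.length_drop, List.length_take]
    omega

lemma length_le_of_not_isReducible [Fintype A] [Nontrivial A] {c : List A}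
    (hc : ¬ IsReducible Set.univ c) : c.length ≤ Fintype.card A ^ 2 + 1 := by
  classical
  by_contra! hlong
  have hcard : (Finset.univ.erase (0 : Fin 2 → A)).card < (Finset.range (c.length - 2)).card := by
    rw [Finset.card_erase_of_mem (Finset.mem_univ _), Finset.card_univ, Finset.card_range,
      Fintype.card_fun, Fintype.card_fin]
    have hq : 0 < Fintype.card A ^ 2 := by positivity
    omega
  have hrow : ∀ k ∈ Finset.range (c.length - 2),
      mProd (c.take k) 0 ∈ Finset.univ.erase (0 : Fin 2 → A) := by
    intro k _
    refine Finset.mem_erase.2 ⟨fun h0 => ?_, Finset.mem_univ _⟩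
    have hdet := det_mProd (c.take k)
    rw [Matrix.det_eq_zero_of_row_eq_zero 0 (fun j => congrFun h0 j)] at hdet
    exact zero_ne_one hdet
  obtain ⟨i, hi, j, hj, hne, hij⟩ := Finset.exists_ne_map_eq_of_card_lt_of_maps_to hcard hrow
  rw [Finset.mem_range] at hi hj
  rcases hne.lt_or_gt with h | h
  · exact hc (isReducible_of_row_mProd_take_eq h (by omega) hij)
  · exact hc (isReducible_of_row_mProd_take_eq h (by omega) hij.symm)

lemma irreducibleQuiddity_zeros [Nontrivial A] :
    IrreducibleQuiddity (Set.univ : Set A) [0, 0, 0, 0] := by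
  refine ⟨⟨fun _ _ => trivial, Or.inl ?_⟩, by simp, ?_⟩
  · ext i j
    fin_cases i <;> fin_cases j <;> simp [mProd, mMat, Matrix.mul_apply, Fin.sum_univ_two]
  rintro ⟨a, b, ha, hb, -, ⟨-, hbq⟩, hc⟩
  have hlen := hc.perm.length_eq
  rw [oplus_length a b ha hb] at hlen
  simp only [List.length_cons, List.length_nil] at hlen
  obtain ⟨b₀, b₁, b₂, rfl⟩ := List.length_eq_three.1 (by omega : b.length = 3)
  have hmem : b₁ ∈ [(0 : A), 0, 0, 0] := hc.perm.subset (by simp [oplus])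
  simp only [List.mem_cons, List.not_mem_nil, or_self, or_false] at hmem
  subst hmem
  rcases hbq with h | h <;> simpa [mProd_triple_one_one] using congrFun (congrFun h 1) 1

end Quiddity

theorem stmt4_general {F : Type*} [Field F] [Fintype F] :
    (∃ c : List F, IrreducibleQuiddity Set.univ c ∧ c.length = 4) ∧
    (∀ c : List F, IrreducibleQuiddity Set.univ c →
      c.length ≤ Fintype.card F ^ 2 + 1) :=
  ⟨⟨_, irreducibleQuiddity_zeros, rfl⟩, fun _ hc => length_le_of_not_isReducible hc.2.2⟩

/-- Over a finite field `F` with `q = 2^m` elements, there is an irreducible λ-quiddity of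
size 4 and every irreducible λ-quiddity has size at most `q² + 1`. -/
theorem stmt4 {F : Type*} [Field F] [Fintype F] (m : ℕ) (hm : 0 < m)
    (hq : Fintype.card F = 2 ^ m) :
    (∃ c : List F, IrreducibleQuiddity Set.univ c ∧ c.length = 4) ∧
    (∀ c : List F, IrreducibleQuiddity Set.univ c →
      c.length ≤ Fintype.card F ^ 2 + 1) :=
  stmt4_general
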